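/- Let Θ ⊆ L_p(μ;X) be dense in L_p(μ;X) with 0 ∈ Θ. Then I_Θ(h)f = I_{L_p(μ;X)}(h)f for all f ∈ Lip_p and all h > 0. -/

import Mathlib

/-!
The inclusion `Θ ⊆ L_p` gives `≤`. Conversely, given `g ∈ L_p`, approximate the slightly
shrunken field `(1 - t) • g` by some `θ ∈ Θ`: then `‖θ‖_p ≤ ‖g‖_p`, so the monotone penalty does
not increase, while `‖θ - g‖_p` is as small as we like. The value `∫ f(y + θ y) dμ` depends
continuously on `θ`, because Hölder's inequality with exponents `p/(p-1)` and `p` gives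
`|∫ f ∘ (id + θ) - ∫ f ∘ (id + g)| ≤ L ‖1 + |id + θ| + |id + g|‖_p ^ (p-1) ‖θ - g‖_p`.
If `‖g‖_p = 0` there is nothing to shrink, and `0 ∈ Θ` is used instead.
-/

open MeasureTheory Filter Set
open scoped Topology ENNReal NNReal RealInnerProductSpace

noncomputable section

variable {X : Type*} [NormedAddCommGroup X] [InnerProductSpace ℝ X]
  [SecondCountableTopology X] [CompleteSpace X] [MeasurableSpace X] [BorelSpace X]

/-- `π` is a coupling of `μ` and `ν`. -/
def IsCoupling (μ ν : Measure X) (π : Measure (X × X)) : Prop :=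
  π.map Prod.fst = μ ∧ π.map Prod.snd = ν

/-- The `p`-Wasserstein distance between `μ` and `ν` (valued in `ℝ≥0∞`). -/
def Wp (p : ℝ) (μ ν : Measure X) : ℝ≥0∞ :=
  (⨅ π ∈ {π : Measure (X × X) | IsCoupling μ ν π},
    ∫⁻ q, (‖q.1 - q.2‖₊ : ℝ≥0∞) ^ p ∂π) ^ (1 / p)

/-- Borel probability measures with finite `p`-th moment. -/
def Pp (p : ℝ) : Set (Measure X) :=
  {ν | IsProbabilityMeasure ν ∧ ∫⁻ x, (‖x‖₊ : ℝ≥0∞) ^ p ∂ν < ⊤}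

/-- The rescaled penalty function `φ_h(v) = h·φ(v/h)`. -/
def phih (φ : ℝ → ℝ≥0∞) (h v : ℝ) : ℝ≥0∞ := ENNReal.ofReal h * φ (v / h)

/-- The risk functional `I(h) f`. -/
def Ifun (μ : Measure X) (φ : ℝ → ℝ≥0∞) (p h : ℝ) (f : X → ℝ) : EReal :=
  ⨆ ν ∈ Pp (X := X) p,
    ((∫ x, f x ∂ν : ℝ) : EReal) - ((phih φ h (Wp p μ ν).toReal : ℝ≥0∞) : EReal)

/-- The `L_p(μ; X)` norm of a vector field. -/
def lpnorm (μ : Measure X) (p : ℝ) (θ : X → X) : ℝ := (∫ y, ‖θ y‖ ^ p ∂μ) ^ (1 / p)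

/-- The parametric risk functional `I_Θ(h) f`, where `μ_θ` is the pushforward of `μ`
under `y ↦ y + θ(y)`. -/
def ITheta (μ : Measure X) (φ : ℝ → ℝ≥0∞) (p : ℝ) (Θ : Set (X → X)) (h : ℝ)
    (f : X → ℝ) : EReal :=
  ⨆ θ ∈ Θ, ((∫ x, f x ∂(μ.map fun y => y + θ y) : ℝ) : EReal)
    - ((phih φ h (lpnorm μ p θ) : ℝ≥0∞) : EReal)

/-- Membership in `Lip_p`. -/
def MemLipP (p : ℝ) (f : X → ℝ) : Prop :=
  ∃ L : ℝ, 0 ≤ L ∧ ∀ x₁ x₂ : X,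
    |f x₁ - f x₂| ≤ L * (1 + max ‖x₁‖ ‖x₂‖) ^ (p - 1) * ‖x₁ - x₂‖

/-- The local Lipschitz constant `|f|_Lip`. -/
def locLip (f : X → ℝ) (x : X) : ℝ :=
  limsup (fun h : ℝ =>
      sSup ((fun u : X => (f (x + h • u) - f x) / h) '' {u : X | ‖u‖ = 0 ∨ ‖u‖ = 1}))
    (𝓝[>] (0 : ℝ))

/-- `v` is a measurable direction of steepest ascent for `f`. -/
def SteepestAscent (f : X → ℝ) (v : X → X) : Prop :=
  Measurable v ∧ ∀ x : X, (‖v x‖ = 0 ∨ ‖v x‖ = 1) ∧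
    Tendsto (fun h : ℝ => (f (x + h • v x) - f x) / h) (𝓝[>] (0 : ℝ)) (𝓝 (locLip f x))

/-- The convex conjugate `φ*` of the penalty function. -/
def phiStar (φ : ℝ → ℝ≥0∞) (u : ℝ) : EReal :=
  ⨆ v ∈ Ici (0 : ℝ), ((u * v : ℝ) : EReal) - ((φ v : ℝ≥0∞) : EReal)

section

variable {α E : Type*} [MeasurableSpace α] {μ : Measure α} [NormedAddCommGroup E] {p : ℝ}

lemma eLpNorm_one_add_norm_add_norm_le [IsProbabilityMeasure μ] {q : ℝ≥0∞} (hq : 1 ≤ q)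
    {w₁ w₂ : α → E} (h₁ : AEStronglyMeasurable w₁ μ) (h₂ : AEStronglyMeasurable w₂ μ) :
    eLpNorm (fun y => 1 + ‖w₁ y‖ + ‖w₂ y‖) q μ ≤ 1 + eLpNorm w₁ q μ + eLpNorm w₂ q μ := by
  have hq0 : q ≠ 0 := (zero_lt_one.trans_le hq).ne'
  calc eLpNorm (fun y => 1 + ‖w₁ y‖ + ‖w₂ y‖) q μ
      ≤ eLpNorm (fun y => 1 + ‖w₁ y‖) q μ + eLpNorm (fun y => ‖w₂ y‖) q μ :=
        eLpNorm_add_le (aestronglyMeasurable_const.add h₁.norm) h₂.norm hq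
    _ ≤ eLpNorm (fun _ => (1 : ℝ)) q μ + eLpNorm (fun y => ‖w₁ y‖) q μ
          + eLpNorm (fun y => ‖w₂ y‖) q μ := by
        gcongr
        exact eLpNorm_add_le aestronglyMeasurable_const h₁.norm hq
    _ = 1 + eLpNorm w₁ q μ + eLpNorm w₂ q μ := by
        simp [eLpNorm_const _ hq0 (NeZero.ne μ), eLpNorm_norm]

lemma eLpNorm_one_rpow_mul_le [IsProbabilityMeasure μ] (hp : 1 < p) {w₁ w₂ : α → E}
    (h₁ : AEStronglyMeasurable w₁ μ) (h₂ : AEStronglyMeasurable w₂ μ) :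
    eLpNorm (fun y => (1 + ‖w₁ y‖ + ‖w₂ y‖) ^ (p - 1) * ‖w₁ y - w₂ y‖) 1 μ
      ≤ (1 + eLpNorm w₁ (.ofReal p) μ + eLpNorm w₂ (.ofReal p) μ) ^ (p - 1)
        * eLpNorm (w₁ - w₂) (.ofReal p) μ := by
  set u : α → ℝ := fun y => 1 + ‖w₁ y‖ + ‖w₂ y‖
  have hu : AEStronglyMeasurable u μ := (aestronglyMeasurable_const.add h₁.norm).add h₂.norm
  have hpq := (Real.HolderConjugate.conjExponent hp).symm.ennrealOfReal
  have hexp : ENNReal.ofReal p.conjExponent * ENNReal.ofReal (p - 1) = ENNReal.ofReal p := by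
    rw [← ENNReal.ofReal_mul (Real.HolderConjugate.conjExponent hp).symm.nonneg,
      Real.conjExponent, div_mul_cancel₀ _ (sub_pos.2 hp).ne']
  calc eLpNorm (fun y => u y ^ (p - 1) * ‖w₁ y - w₂ y‖) 1 μ
      = eLpNorm ((fun y => ‖u y‖ ^ (p - 1)) • fun y => ‖(w₁ - w₂) y‖) 1 μ := by
        refine eLpNorm_congr_norm_ae (ae_of_all _ fun y => ?_)
        simp [u, abs_of_nonneg (by positivity : (0:ℝ) ≤ 1 + ‖w₁ y‖ + ‖w₂ y‖)]
    _ ≤ eLpNorm (fun y => ‖u y‖ ^ (p - 1)) (.ofReal p.conjExponent) μ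
          * eLpNorm (fun y => ‖(w₁ - w₂) y‖) (.ofReal p) μ :=
        eLpNorm_smul_le_mul_eLpNorm (h₁.sub h₂).norm
          (hu.norm.aemeasurable.pow_const _).aestronglyMeasurable
    _ = eLpNorm u (.ofReal p) μ ^ (p - 1) * eLpNorm (w₁ - w₂) (.ofReal p) μ := by
        rw [eLpNorm_norm_rpow _ (sub_pos.2 hp), hexp, eLpNorm_norm]
    _ ≤ _ := by
        gcongr
        exact eLpNorm_one_add_norm_add_norm_le (by simpa using hp.le) h₁ h₂

variable {L : ℝ} {f : E → ℝ}

lemma abs_sub_le_of_lipP (hp : 1 ≤ p) (hL : 0 ≤ L)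
    (hf : ∀ x₁ x₂ : E, |f x₁ - f x₂| ≤ L * (1 + max ‖x₁‖ ‖x₂‖) ^ (p - 1) * ‖x₁ - x₂‖)
    (x₁ x₂ : E) : |f x₁ - f x₂| ≤ L * (1 + ‖x₁‖ + ‖x₂‖) ^ (p - 1) * ‖x₁ - x₂‖ := by
  refine (hf x₁ x₂).trans ?_
  have : max ‖x₁‖ ‖x₂‖ ≤ ‖x₁‖ + ‖x₂‖ := max_le_add_of_nonneg (norm_nonneg _) (norm_nonneg _)
  gcongr L * ?_ ^ _ * _
  linarith

lemma continuous_of_lipP (hp : 1 ≤ p) (hL : 0 ≤ L)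
    (hf : ∀ x₁ x₂ : E, |f x₁ - f x₂| ≤ L * (1 + max ‖x₁‖ ‖x₂‖) ^ (p - 1) * ‖x₁ - x₂‖) :
    Continuous f := by
  refine continuous_iff_continuousAt.2 fun x => tendsto_iff_norm_sub_tendsto_zero.2 ?_
  have hbound : Tendsto (fun y => L * (1 + ‖y‖ + ‖x‖) ^ (p - 1) * ‖y - x‖) (𝓝 x) (𝓝 0) := by
    have : Continuous fun y => L * (1 + ‖y‖ + ‖x‖) ^ (p - 1) * ‖y - x‖ := by
      fun_prop (disch := linarith)
    simpa using this.tendsto x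
  exact squeeze_zero (fun _ => norm_nonneg _) (abs_sub_le_of_lipP hp hL hf · x) hbound

lemma enorm_integral_comp_sub_le [IsProbabilityMeasure μ] (hp : 1 < p) (hL : 0 ≤ L)
    (hf : ∀ x₁ x₂ : E, |f x₁ - f x₂| ≤ L * (1 + max ‖x₁‖ ‖x₂‖) ^ (p - 1) * ‖x₁ - x₂‖)
    {w₁ w₂ : α → E} (h₁ : AEStronglyMeasurable w₁ μ) (h₂ : AEStronglyMeasurable w₂ μ)
    (hi₁ : Integrable (fun y => f (w₁ y)) μ) (hi₂ : Integrable (fun y => f (w₂ y)) μ) :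
    ‖∫ y, f (w₁ y) ∂μ - ∫ y, f (w₂ y) ∂μ‖ₑ
      ≤ ENNReal.ofReal L * ((1 + eLpNorm w₁ (.ofReal p) μ + eLpNorm w₂ (.ofReal p) μ) ^ (p - 1)
        * eLpNorm (w₁ - w₂) (.ofReal p) μ) := by
  rw [← integral_sub hi₁ hi₂]
  calc ‖∫ y, f (w₁ y) - f (w₂ y) ∂μ‖ₑ
      ≤ eLpNorm (fun y => f (w₁ y) - f (w₂ y)) 1 μ :=
        (enorm_integral_le_lintegral_enorm _).trans_eq eLpNorm_one_eq_lintegral_enorm.symm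
    _ ≤ ENNReal.ofReal L
          * eLpNorm (fun y => (1 + ‖w₁ y‖ + ‖w₂ y‖) ^ (p - 1) * ‖w₁ y - w₂ y‖) 1 μ := by
        refine eLpNorm_le_mul_eLpNorm_of_ae_le_mul (ae_of_all _ fun y => ?_) 1
        rw [Real.norm_eq_abs, Real.norm_of_nonneg (by positivity), ← mul_assoc]
        exact abs_sub_le_of_lipP hp.le hL hf _ _
    _ ≤ _ := by
        gcongr
        exact eLpNorm_one_rpow_mul_le hp h₁ h₂

lemma integrable_comp_of_lipP [IsProbabilityMeasure μ] (hp : 1 < p) (hL : 0 ≤ L)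
    (hf : ∀ x₁ x₂ : E, |f x₁ - f x₂| ≤ L * (1 + max ‖x₁‖ ‖x₂‖) ^ (p - 1) * ‖x₁ - x₂‖)
    {w : α → E} (hw : MemLp w (.ofReal p) μ) : Integrable (fun y => f (w y)) μ := by
  have hG : Integrable (fun y => (1 + ‖w y‖ + ‖(0 : E)‖) ^ (p - 1) * ‖w y - 0‖) μ := by
    have hwm := hw.1
    refine memLp_one_iff_integrable.1 ⟨by fun_prop (disch := linarith), ?_⟩
    refine (eLpNorm_one_rpow_mul_le hp hw.1 (w₂ := 0)
      aestronglyMeasurable_const).trans_lt ?_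
    have := hw.2
    simp only [eLpNorm_zero, add_zero, sub_zero]
    finiteness
  have hdiff : Integrable (fun y => f (w y) - f 0) μ := by
    refine (hG.const_mul L).mono' ?_ (ae_of_all _ fun y => ?_)
    · exact ((continuous_of_lipP hp.le hL hf).comp_aestronglyMeasurable hw.1).sub
        aestronglyMeasurable_const
    · simpa only [mul_assoc, Real.norm_eq_abs] using abs_sub_le_of_lipP hp.le hL hf (w y) 0
  exact (hdiff.add (integrable_const (f 0))).congr (ae_of_all _ fun y => sub_add_cancel _ _)

end

section

variable {α E : Type*} [MeasurableSpace α] {μ : Measure α} [NormedAddCommGroup E]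
  [NormedSpace ℝ E] {q : ℝ≥0∞}

lemma exists_mem_eLpNorm_le_eLpNorm_sub_lt (hq : 1 ≤ q) {Θ : Set (α → E)}
    (hΘ : ∀ θ ∈ Θ, AEStronglyMeasurable θ μ) (hzero : 0 ∈ Θ)
    (hdense : ∀ g : α → E, MemLp g q μ → ∀ ε : ℝ≥0∞, 0 < ε →
      ∃ θ ∈ Θ, eLpNorm (g - θ) q μ < ε)
    {g : α → E} (hg : MemLp g q μ) {ε : ℝ≥0∞} (hε : 0 < ε) :
    ∃ θ ∈ Θ, eLpNorm θ q μ ≤ eLpNorm g q μ ∧ eLpNorm (θ - g) q μ < ε := by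
  rcases eq_or_ne (eLpNorm g q μ) 0 with hN | hN
  · exact ⟨0, hzero, by simp, by rwa [zero_sub, eLpNorm_neg, hN]⟩
  set N := eLpNorm g q μ
  have hsmall : ∀ᶠ t in 𝓝[>] (0 : ℝ), t < 1 ∧ ENNReal.ofReal t * (2 * N) < ε := by
    refine (eventually_lt_nhds one_pos).and ?_ |>.filter_mono nhdsWithin_le_nhds
    have : Tendsto (fun t => ENNReal.ofReal t * (2 * N)) (𝓝 0) (𝓝 (ENNReal.ofReal 0 * (2 * N))) :=
      ENNReal.Tendsto.mul_const (ENNReal.tendsto_ofReal tendsto_id) (Or.inr (by finiteness))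
    simpa using this.eventually (gt_mem_nhds (by simpa using hε))
  obtain ⟨t, ⟨ht1, htε⟩, ht0⟩ := (hsmall.and self_mem_nhdsWithin).exists
  have hg' : MemLp ((1 - t) • g) q μ := hg.const_smul _
  obtain ⟨θ, hθΘ, hθ⟩ := hdense _ hg' (ENNReal.ofReal t * N)
    (ENNReal.mul_pos (by simpa using ht0) hN)
  have hθg' : eLpNorm (θ - (1 - t) • g) q μ < ENNReal.ofReal t * N := by
    rwa [eLpNorm_sub_comm]
  refine ⟨θ, hθΘ, ?_, ?_⟩
  · calc eLpNorm θ q μ ≤ eLpNorm (θ - (1 - t) • g) q μ + eLpNorm ((1 - t) • g) q μ := by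
          simpa using eLpNorm_add_le ((hΘ θ hθΘ).sub hg'.1) hg'.1 hq
      _ ≤ ENNReal.ofReal t * N + ENNReal.ofReal (1 - t) * N := by
          rw [eLpNorm_const_smul, Real.enorm_of_nonneg (by linarith)]
          exact add_le_add_left hθg'.le _
      _ = N := by
          rw [← add_mul, ← ENNReal.ofReal_add ht0.le (by linarith)]
          simp
  · calc eLpNorm (θ - g) q μ ≤ eLpNorm (θ - (1 - t) • g) q μ + eLpNorm (t • g) q μ := by
          have : θ - g = (θ - (1 - t) • g) - t • g := by module
          rw [this]
          exact eLpNorm_sub_le ((hΘ θ hθΘ).sub hg'.1) (hg.const_smul t).1 hq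
      _ < ENNReal.ofReal t * N + ENNReal.ofReal t * N := by
          rw [eLpNorm_const_smul, Real.enorm_of_nonneg ht0.le]
          exact ENNReal.add_lt_add_right (by finiteness) hθg'
      _ = ENNReal.ofReal t * (2 * N) := by ring
      _ < ε := htε

end

section

variable {E : Type*} [NormedAddCommGroup E] [MeasurableSpace E] {μ : Measure E}
  [IsProbabilityMeasure μ] {p L : ℝ} {f : E → ℝ}

lemma exists_pos_abs_integral_comp_add_sub_le (hp : 1 < p) (hL : 0 ≤ L)
    (hf : ∀ x₁ x₂ : E, |f x₁ - f x₂| ≤ L * (1 + max ‖x₁‖ ‖x₂‖) ^ (p - 1) * ‖x₁ - x₂‖)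
    (hid : MemLp (fun x => x) (.ofReal p) μ) {g : E → E} (hg : MemLp g (.ofReal p) μ)
    {ε : ℝ} (hε : 0 < ε) :
    ∃ δ > 0, ∀ θ : E → E, MemLp θ (.ofReal p) μ →
      eLpNorm θ (.ofReal p) μ ≤ eLpNorm g (.ofReal p) μ → eLpNorm (θ - g) (.ofReal p) μ < δ →
      |∫ y, f (y + θ y) ∂μ - ∫ y, f (y + g y) ∂μ| ≤ ε := by
  set I := eLpNorm (fun x : E => x) (.ofReal p) μ
  set A := 1 + (I + eLpNorm g (.ofReal p) μ) + eLpNorm (fun y => y + g y) (.ofReal p) μ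
  have hA : A ≠ ⊤ := by
    have := hid.2; have := hg.2; have := (hid.add hg).2
    finiteness
  refine ⟨.ofReal ε / (.ofReal L * A ^ (p - 1)), ENNReal.div_pos (by simpa using hε)
    (by have := sub_pos.2 hp; finiteness), fun θ hθ hθg hδ => ?_⟩
  have hdiff : (fun y => y + θ y) - (fun y => y + g y) = θ - g := by
    ext y
    simp
  rw [← ENNReal.ofReal_le_ofReal_iff hε.le, ← Real.enorm_eq_ofReal_abs]
  calc ‖∫ y, f (y + θ y) ∂μ - ∫ y, f (y + g y) ∂μ‖ₑ
      ≤ .ofReal L * ((1 + eLpNorm (fun y => y + θ y) (.ofReal p) μ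
          + eLpNorm (fun y => y + g y) (.ofReal p) μ) ^ (p - 1)
          * eLpNorm ((fun y => y + θ y) - fun y => y + g y) (.ofReal p) μ) :=
        enorm_integral_comp_sub_le hp hL hf (hid.add hθ).1 (hid.add hg).1
          (integrable_comp_of_lipP hp hL hf (hid.add hθ))
          (integrable_comp_of_lipP hp hL hf (hid.add hg))
    _ ≤ .ofReal L * (A ^ (p - 1) * (.ofReal ε / (.ofReal L * A ^ (p - 1)))) := by
        rw [hdiff]
        have : eLpNorm (fun y => y + θ y) (.ofReal p) μ ≤ I + eLpNorm g (.ofReal p) μ :=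
          (eLpNorm_add_le hid.1 hθ.1 (by simpa using hp.le)).trans (by gcongr)
        gcongr
        simp only [A]
        gcongr
    _ ≤ .ofReal ε := by
        rw [← mul_assoc]
        exact ENNReal.mul_div_le

end

lemma biSup_coe_sub_coe_le_biSup {ι : Type*} {s t : Set ι} {a : ι → ℝ} {b : ι → ℝ≥0∞}
    (h : ∀ i ∈ s, ∀ ε > 0, ∃ j ∈ t, b j ≤ b i ∧ a i - ε ≤ a j) :
    ⨆ i ∈ s, ((a i : EReal) - b i) ≤ ⨆ j ∈ t, ((a j : EReal) - b j) := by
  refine iSup₂_le fun i hi => ?_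
  rcases eq_or_ne (b i) ⊤ with hb | hb
  · simp [hb]
  rw [← EReal.coe_ennreal_toReal hb, ← EReal.coe_sub]
  refine EReal.ge_of_forall_gt_iff_ge.1 fun z hz => ?_
  obtain ⟨j, hj, hbj, haj⟩ :=
    h i hi (a i - (b i).toReal - z) (sub_pos.2 (EReal.coe_lt_coe_iff.1 hz))
  calc (z : EReal) = ((a i - (a i - (b i).toReal - z) : ℝ) : EReal) - b i := by
        rw [← EReal.coe_ennreal_toReal hb, ← EReal.coe_sub]; ring_nf
    _ ≤ (a j : EReal) - b j := EReal.sub_le_sub (by exact_mod_cast haj) (by exact_mod_cast hbj)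
    _ ≤ ⨆ j ∈ t, ((a j : EReal) - b j) := le_iSup₂_of_le j hj le_rfl

lemma monotoneOn_phih {φ : ℝ → ℝ≥0∞} (hφ : MonotoneOn φ (Ici 0)) {h : ℝ} (hh : 0 ≤ h) :
    MonotoneOn (phih φ h) (Ici 0) := fun _ hv₁ _ hv₂ hle =>
  mul_le_mul_right
    (hφ (div_nonneg hv₁ hh) (div_nonneg hv₂ hh) (div_le_div_of_nonneg_right hle hh)) _

section

variable {E : Type*} [NormedAddCommGroup E] [MeasurableSpace E] {p : ℝ} {μ : Measure E}

lemma memLp_id_of_mem_Pp [OpensMeasurableSpace E] [SecondCountableTopology E] (hp : 0 < p)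
    (hμ : μ ∈ Pp p) : MemLp (fun x : E => x) (.ofReal p) μ := by
  refine ⟨aestronglyMeasurable_id, ?_⟩
  rw [eLpNorm_lt_top_iff_lintegral_rpow_enorm_lt_top (by simpa) ENNReal.ofReal_ne_top,
    ENNReal.toReal_ofReal hp.le]
  simpa [enorm_eq_nnnorm] using hμ.2

lemma lpnorm_nonneg (θ : E → E) : 0 ≤ lpnorm μ p θ :=
  Real.rpow_nonneg (integral_nonneg fun _ => by positivity) _

lemma lpnorm_eq_toReal_eLpNorm (hp : 0 < p) {θ : E → E} (hθ : AEStronglyMeasurable θ μ) :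
    lpnorm μ p θ = (eLpNorm θ (.ofReal p) μ).toReal := by
  rw [toReal_eLpNorm hθ, lpNorm_eq_integral_norm_rpow_toReal (by simpa) ENNReal.ofReal_ne_top hθ,
    ENNReal.toReal_ofReal hp.le, lpnorm, one_div]

lemma exists_mem_lpnorm_le_integral_map_ge [NormedSpace ℝ E] [BorelSpace E]
    [IsProbabilityMeasure μ] (hp : 1 < p) (hid : MemLp (fun x : E => x) (.ofReal p) μ)
    {f : E → ℝ} (hf : MemLipP p f) {Θ : Set (E → E)} (hΘ : ∀ θ ∈ Θ, MemLp θ (.ofReal p) μ)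
    (hzero : 0 ∈ Θ)
    (hdense : ∀ g : E → E, MemLp g (.ofReal p) μ → ∀ ε : ℝ≥0∞, 0 < ε →
      ∃ θ ∈ Θ, eLpNorm (g - θ) (.ofReal p) μ < ε)
    {g : E → E} (hg : MemLp g (.ofReal p) μ) {ε : ℝ} (hε : 0 < ε) :
    ∃ θ ∈ Θ, lpnorm μ p θ ≤ lpnorm μ p g ∧
      ∫ x, f x ∂(μ.map fun y => y + g y) - ε ≤ ∫ x, f x ∂(μ.map fun y => y + θ y) := by
  obtain ⟨L, hL, hLip⟩ := hf
  obtain ⟨δ, hδ, hclose⟩ := exists_pos_abs_integral_comp_add_sub_le hp hL hLip hid hg hε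
  obtain ⟨θ, hθΘ, hθg, hθδ⟩ := exists_mem_eLpNorm_le_eLpNorm_sub_lt (by simpa using hp.le)
    (fun θ hθ => (hΘ θ hθ).1) hzero hdense hg hδ
  have hp0 : 0 < p := zero_lt_one.trans hp
  have hfc := continuous_of_lipP hp.le hL hLip
  have hshift : ∀ θ : E → E, MemLp θ (.ofReal p) μ → AEMeasurable (fun y => y + θ y) μ :=
    fun θ hθ => (hid.add hθ).1.aemeasurable
  refine ⟨θ, hθΘ, ?_, ?_⟩
  · rw [lpnorm_eq_toReal_eLpNorm hp0 (hΘ θ hθΘ).1, lpnorm_eq_toReal_eLpNorm hp0 hg.1]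
    exact ENNReal.toReal_mono hg.2.ne hθg
  · rw [integral_map (hshift g hg) hfc.aestronglyMeasurable,
      integral_map (hshift θ (hΘ θ hθΘ)) hfc.aestronglyMeasurable]
    linarith [(abs_le.1 (hclose θ (hΘ θ hθΘ) hθg hθδ)).1]

end

theorem stmt12_general (p : ℝ) (hp : 1 < p)
    (μ : Measure X) (hμ : μ ∈ Pp (X := X) p)
    (φ : ℝ → ℝ≥0∞) (hmono : MonotoneOn φ (Ici (0 : ℝ)))
    (Θ : Set (X → X)) (hΘ : ∀ g ∈ Θ, MemLp g (ENNReal.ofReal p) μ)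
    (hzeroΘ : (fun _ : X => (0 : X)) ∈ Θ)
    (hdense : ∀ g : X → X, MemLp g (ENNReal.ofReal p) μ → ∀ ε : ℝ≥0∞, 0 < ε →
      ∃ θ ∈ Θ, eLpNorm (fun x => g x - θ x) (ENNReal.ofReal p) μ < ε) :
    ∀ f : X → ℝ, MemLipP p f → ∀ h : ℝ, 0 < h →
      ITheta μ φ p Θ h f
        = ITheta μ φ p {g : X → X | MemLp g (ENNReal.ofReal p) μ} h f := by
  intro f hf h hh
  have hp0 : 0 < p := zero_lt_one.trans hp
  have : IsProbabilityMeasure μ := hμ.1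
  refine le_antisymm (biSup_mono fun θ hθ => hΘ θ hθ) ?_
  refine biSup_coe_sub_coe_le_biSup fun g hg ε hε => ?_
  obtain ⟨θ, hθΘ, hθg, hfθ⟩ := exists_mem_lpnorm_le_integral_map_ge hp
    (memLp_id_of_mem_Pp hp0 hμ) hf hΘ hzeroΘ hdense hg hε
  exact ⟨θ, hθΘ, monotoneOn_phih hmono hh.le (lpnorm_nonneg θ) (lpnorm_nonneg g) hθg, hfθ⟩

theorem stmt12 (p : ℝ) (hp : 1 < p)
    (μ : Measure X) (hμ : μ ∈ Pp (X := X) p)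
    (φ : ℝ → ℝ≥0∞) (hmono : MonotoneOn φ (Ici (0 : ℝ))) (hzero : φ 0 = 0)
    (hgrowth : 0 < liminf (fun v : ℝ => φ v / ENNReal.ofReal (v ^ p)) atTop)
    (Θ : Set (X → X)) (hΘ : ∀ g ∈ Θ, MemLp g (ENNReal.ofReal p) μ)
    (hzeroΘ : (fun _ : X => (0 : X)) ∈ Θ)
    (hdense : ∀ g : X → X, MemLp g (ENNReal.ofReal p) μ → ∀ ε : ℝ≥0∞, 0 < ε →
      ∃ θ ∈ Θ, eLpNorm (fun x => g x - θ x) (ENNReal.ofReal p) μ < ε) :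
    ∀ f : X → ℝ, MemLipP p f → ∀ h : ℝ, 0 < h →
      ITheta μ φ p Θ h f
        = ITheta μ φ p {g : X → X | MemLp g (ENNReal.ofReal p) μ} h f :=
  stmt12_general p hp μ hμ φ hmono Θ hΘ hzeroΘ hdense
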